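/- Suppose δ̄₃† κ² < 1/4. Then the minimizer υ̃ satisfies ‖F^{1/2}(υ̃ − υ*)‖ ≤ (4/3) r and ‖D(υ̃ − υ*)‖ ≤ (4κ/3) r. -/

import Mathlib

/-!
The minimizer `υt` of the convex function `L = f + ⟪ξ, ·⟫` satisfies `⟪∇L x, x - υt⟫ ≥ 0` for
every `x`. Scaling `υt - υs` back to the ellipsoid `‖F^{1/2} v‖ = R` therefore shows that `υt`
lies inside that ellipsoid as soon as `⟪∇L (υs + v), v⟫ > 0` on it. For `R = 4r/3` this holds:
since `∇f υs = 0`, the definition of `δ3` and `D² ≼ κ² F` give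
`⟪∇f (υs + v), v⟫ ≥ (1 - δ3 κ²) R² > (3/4) R² = r R`, while
`⟪ξ, v⟫ ≥ -‖F^{-1/2} ξ‖ ‖F^{1/2} v‖ ≥ -r R`. The bound on `‖D (υt - υs)‖` then follows from
`D² ≼ κ² F` once more.
-/

open MeasureTheory RealInnerProductSpace

/-- Application of a matrix to a vector in Euclidean space. -/
noncomputable def mApp {p q : ℕ} (M : Matrix (Fin q) (Fin p) ℝ)
    (v : EuclideanSpace ℝ (Fin p)) : EuclideanSpace ℝ (Fin q) :=
  Matrix.toEuclideanLin M v

/-- Operator norm of (the Euclidean linear map induced by) a matrix. -/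
noncomputable def mopNorm {p q : ℕ} (M : Matrix (Fin q) (Fin p) ℝ) : ℝ :=
  ‖(LinearMap.toContinuousLinearMap (Matrix.toEuclideanLin M))‖

/-- The positive semidefinite square root of a positive semidefinite matrix
(the definition `Matrix.PosSemidef.sqrt` of the older Mathlib, removed since). -/
noncomputable def Matrix.PosSemidef.sqrt {𝕜 : Type*} [RCLike 𝕜] [PartialOrder 𝕜] {n : Type*} [Fintype n]
    [DecidableEq n] {A : Matrix n n 𝕜} (hA : A.PosSemidef) : Matrix n n 𝕜 :=
  hA.1.eigenvectorUnitary.1 * Matrix.diagonal ((↑) ∘ (√·) ∘ hA.1.eigenvalues) *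
    (star hA.1.eigenvectorUnitary : Matrix n n 𝕜)

open Matrix

namespace Matrix.PosSemidef

variable {n : ℕ} {A : Matrix (Fin n) (Fin n) ℝ}

lemma isHermitian_sqrt (hA : A.PosSemidef) : hA.sqrt.IsHermitian := by
  simp [Matrix.PosSemidef.sqrt, Matrix.IsHermitian, Matrix.mul_assoc,
    Matrix.star_eq_conjTranspose]

lemma sqrt_mul_sqrt (hA : A.PosSemidef) : hA.sqrt * hA.sqrt = A := by
  set U : Matrix (Fin n) (Fin n) ℝ := hA.1.eigenvectorUnitary.1
  have hUU : star U * U = 1 := Unitary.coe_star_mul_self _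
  have hdiag : diagonal (((↑) : ℝ → ℝ) ∘ (√·) ∘ hA.1.eigenvalues) *
      diagonal (((↑) : ℝ → ℝ) ∘ (√·) ∘ hA.1.eigenvalues) =
      diagonal (RCLike.ofReal ∘ hA.1.eigenvalues) := by
    rw [diagonal_mul_diagonal]
    congr 1; funext i
    simp [Real.mul_self_sqrt (hA.eigenvalues_nonneg i)]
  conv_rhs => rw [hA.1.spectral_theorem, ← hdiag]
  simp only [sqrt, Unitary.conjStarAlgAut_apply, Matrix.mul_assoc]
  rw [← Matrix.mul_assoc (star U) U, hUU, Matrix.one_mul]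
  rfl

end Matrix.PosSemidef

lemma Matrix.PosDef.isUnit_sqrt {n : ℕ} {A : Matrix (Fin n) (Fin n) ℝ} (hA : A.PosDef) :
    IsUnit hA.posSemidef.sqrt := by
  rw [isUnit_iff_isUnit_det]
  refine isUnit_of_mul_isUnit_left (y := hA.posSemidef.sqrt.det) ?_
  rw [← det_mul, PosSemidef.sqrt_mul_sqrt]
  exact (isUnit_iff_isUnit_det A).1 hA.isUnit

section mApp

variable {p : ℕ}

lemma mApp_mul (A B : Matrix (Fin p) (Fin p) ℝ) (v : EuclideanSpace ℝ (Fin p)) :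
    mApp (A * B) v = mApp A (mApp B v) := by
  simp [mApp]

lemma mApp_one (v : EuclideanSpace ℝ (Fin p)) : mApp 1 v = v := by
  simp [mApp]

lemma mApp_sub (A B : Matrix (Fin p) (Fin p) ℝ) (v : EuclideanSpace ℝ (Fin p)) :
    mApp (A - B) v = mApp A v - mApp B v := by
  simp [mApp]

lemma mApp_smul (c : ℝ) (A : Matrix (Fin p) (Fin p) ℝ) (v : EuclideanSpace ℝ (Fin p)) :
    mApp (c • A) v = c • mApp A v := by
  simp [mApp]

lemma mApp_inv_mApp {M : Matrix (Fin p) (Fin p) ℝ} (hM : IsUnit M) (v : EuclideanSpace ℝ (Fin p)) :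
    mApp M⁻¹ (mApp M v) = v := by
  rw [← mApp_mul, nonsing_inv_mul _ ((isUnit_iff_isUnit_det M).1 hM), mApp_one]

lemma mApp_mApp_inv {M : Matrix (Fin p) (Fin p) ℝ} (hM : IsUnit M) (v : EuclideanSpace ℝ (Fin p)) :
    mApp M (mApp M⁻¹ v) = v := by
  rw [← mApp_mul, mul_nonsing_inv _ ((isUnit_iff_isUnit_det M).1 hM), mApp_one]

lemma mApp_ne_zero {M : Matrix (Fin p) (Fin p) ℝ} (hM : IsUnit M) {v : EuclideanSpace ℝ (Fin p)}
    (hv : v ≠ 0) : mApp M v ≠ 0 := fun h => hv <| by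
  rw [← mApp_inv_mApp hM v, h]
  simp [mApp]

lemma inner_mApp_left {M : Matrix (Fin p) (Fin p) ℝ} (hM : M.IsHermitian)
    (x y : EuclideanSpace ℝ (Fin p)) : ⟪mApp M x, y⟫ = ⟪x, mApp M y⟫ :=
  isSymmetric_toEuclideanLin_iff.2 hM x y

lemma inner_mApp_mul_self {M : Matrix (Fin p) (Fin p) ℝ} (hM : M.IsHermitian)
    (v : EuclideanSpace ℝ (Fin p)) : ⟪mApp (M * M) v, v⟫ = ‖mApp M v‖ ^ 2 := by
  rw [mApp_mul, inner_mApp_left hM, real_inner_self_eq_norm_sq]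

lemma norm_mApp_le (M : Matrix (Fin p) (Fin p) ℝ) (v : EuclideanSpace ℝ (Fin p)) :
    ‖mApp M v‖ ≤ mopNorm M * ‖v‖ :=
  (LinearMap.toContinuousLinearMap (toEuclideanLin M)).le_opNorm v

lemma norm_le_mopNorm_inv_mul {M : Matrix (Fin p) (Fin p) ℝ} (hM : IsUnit M)
    (v : EuclideanSpace ℝ (Fin p)) : ‖v‖ ≤ mopNorm M⁻¹ * ‖mApp M v‖ := by
  simpa only [mApp_inv_mApp hM] using norm_mApp_le M⁻¹ (mApp M v)

lemma abs_inner_le_norm_mApp_inv_mul {M : Matrix (Fin p) (Fin p) ℝ} (hM : M.IsHermitian)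
    (hMu : IsUnit M) (ξ v : EuclideanSpace ℝ (Fin p)) :
    |⟪ξ, v⟫| ≤ ‖mApp M⁻¹ ξ‖ * ‖mApp M v‖ := by
  calc |⟪ξ, v⟫| = |⟪mApp M⁻¹ ξ, mApp M v⟫| := by rw [← inner_mApp_left hM, mApp_mApp_inv hMu]
    _ ≤ ‖mApp M⁻¹ ξ‖ * ‖mApp M v‖ := abs_real_inner_le_norm _ _

lemma norm_mApp_le_of_posSemidef {S D : Matrix (Fin p) (Fin p) ℝ} (hS : S.IsHermitian)
    (hD : D.IsHermitian) {κ : ℝ} (hκ : 0 ≤ κ) (h : (κ ^ 2 • (S * S) - D * D).PosSemidef)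
    (v : EuclideanSpace ℝ (Fin p)) : ‖mApp D v‖ ≤ κ * ‖mApp S v‖ := by
  have hnonneg : 0 ≤ ⟪mApp (κ ^ 2 • (S * S) - D * D) v, v⟫ :=
    (isPositive_toEuclideanLin_iff.2 h).inner_nonneg_left v
  rw [mApp_sub, mApp_smul, inner_sub_left, real_inner_smul_left, inner_mApp_mul_self hS,
    inner_mApp_mul_self hD] at hnonneg
  exact (pow_le_pow_iff_left₀ (norm_nonneg _) (by positivity) two_ne_zero).1 (by linarith)

end mApp

theorem ConvexOn.add_le_of_hasFDerivAt {E : Type*} [NormedAddCommGroup E] [NormedSpace ℝ E]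
    {s : Set E} {f : E → ℝ} {f' : E →L[ℝ] ℝ} {x y : E} (hf : ConvexOn ℝ s f)
    (hx : x ∈ s) (hy : y ∈ s) (hf' : HasFDerivAt f f' x) : f x + f' (y - x) ≤ f y := by
  set g : ℝ →ᵃ[ℝ] E := AffineMap.lineMap x y
  have hg : ConvexOn ℝ (g ⁻¹' s) (f ∘ g) := hf.comp_affineMap g
  have hderiv : HasDerivAt (f ∘ g) (f' (y - x)) 0 := by
    have hline : HasDerivAt g (y - x) 0 := AffineMap.hasDerivAt_lineMap
    have hf'' : HasFDerivAt f f' (g 0) := by simpa [g] using hf'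
    exact hf''.comp_hasDerivAt 0 hline
  have hslope := hg.le_slope_of_hasDerivAt (by simpa [g] using hx) (by simpa [g] using hy)
    one_pos hderiv
  simp only [slope, g, Function.comp_apply, AffineMap.lineMap_apply_one,
    AffineMap.lineMap_apply_zero, sub_zero, inv_one, one_smul, vsub_eq_sub] at hslope
  linarith

section Convex

variable {E : Type*} [NormedAddCommGroup E] [InnerProductSpace ℝ E] [CompleteSpace E]

theorem ConvexOn.inner_gradient_add_sub_nonneg {f : E → ℝ} (hf : ConvexOn ℝ Set.univ f)
    {ξ m x : E} (hx : DifferentiableAt ℝ f x)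
    (hmin : ∀ y, f m + ⟪ξ, m⟫ ≤ f y + ⟪ξ, y⟫) : 0 ≤ ⟪gradient f x + ξ, x - m⟫ := by
  have hsupp : f x + ⟪gradient f x, m - x⟫ ≤ f m :=
    hf.add_le_of_hasFDerivAt (Set.mem_univ x) (Set.mem_univ m) hx.hasGradientAt.hasFDerivAt
  rw [inner_sub_right] at hsupp
  rw [inner_add_left, inner_sub_right, inner_sub_right]
  linarith [hmin x]

theorem ConvexOn.norm_map_sub_le_of_inner_gradient_add_pos {E' : Type*} [NormedAddCommGroup E']
    [NormedSpace ℝ E'] {f : E → ℝ} (hf : ConvexOn ℝ Set.univ f) (hdiff : Differentiable ℝ f)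
    {ξ m : E} (hmin : ∀ y, f m + ⟪ξ, m⟫ ≤ f y + ⟪ξ, y⟫) (T : E →ₗ[ℝ] E') (x₀ : E) {R : ℝ}
    (hR : 0 ≤ R) (hpos : ∀ v, ‖T v‖ = R → 0 < ⟪gradient f (x₀ + v) + ξ, v⟫) :
    ‖T (m - x₀)‖ ≤ R := by
  by_contra! hfar
  set u := m - x₀
  have hTu : 0 < ‖T u‖ := hR.trans_lt hfar
  set t := R / ‖T u‖
  have ht₀ : 0 ≤ t := div_nonneg hR hTu.le
  have ht₁ : t < 1 := (div_lt_one hTu).2 hfar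
  have hTv : ‖T (t • u)‖ = R := by
    rw [map_smul, norm_smul, Real.norm_of_nonneg ht₀, div_mul_cancel₀ _ hTu.ne']
  set w := gradient f (x₀ + t • u) + ξ
  have hinward : 0 < t * ⟪w, u⟫ := by
    simpa only [real_inner_smul_right] using hpos (t • u) hTv
  have houtward : 0 ≤ (t - 1) * ⟪w, u⟫ := by
    have h := hf.inner_gradient_add_sub_nonneg (hdiff (x₀ + t • u)) hmin
    rwa [show x₀ + t • u - m = (t - 1) • u by simp only [u, sub_smul, one_smul]; abel,
      real_inner_smul_right] at h
  nlinarith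

end Convex

theorem ContDiff.exists_abs_inner_gradient_sub_sub_le {E : Type*} [NormedAddCommGroup E]
    [InnerProductSpace ℝ E] [FiniteDimensional ℝ E] {f : E → ℝ} (hf : ContDiff ℝ 2 f)
    (x₀ : E) (A : E →ₗ[ℝ] E) (ρ : ℝ) :
    ∃ C, 0 ≤ C ∧ ∀ u, ‖u‖ ≤ ρ →
      |⟪gradient f (x₀ + u) - gradient f x₀, u⟫ - ⟪A u, u⟫| ≤ C * ‖u‖ ^ 2 := by
  have hgrad : ContDiff ℝ 1 (gradient f) :=
    (InnerProductSpace.toDual ℝ E).symm.toContinuousLinearEquiv.contDiff.comp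
      (hf.fderiv_right (by norm_num))
  obtain ⟨K, hK⟩ := hgrad.contDiffOn.exists_lipschitzOnWith one_ne_zero
    (convex_closedBall x₀ ρ) (isCompact_closedBall x₀ ρ)
  set A' := LinearMap.toContinuousLinearMap A
  refine ⟨K + ‖A'‖, by positivity, fun u hu => ?_⟩
  have hlip : ‖gradient f (x₀ + u) - gradient f x₀‖ ≤ K * ‖u‖ := by
    simpa using hK.norm_sub_le (x := x₀ + u) (by simpa using hu)
      (Metric.mem_closedBall_self ((norm_nonneg u).trans hu))
  have hA : ‖A u‖ ≤ ‖A'‖ * ‖u‖ := A'.le_opNorm u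
  calc |⟪gradient f (x₀ + u) - gradient f x₀, u⟫ - ⟪A u, u⟫|
      ≤ ‖gradient f (x₀ + u) - gradient f x₀‖ * ‖u‖ + ‖A u‖ * ‖u‖ :=
        (abs_sub _ _).trans (add_le_add (abs_real_inner_le_norm _ _) (abs_real_inner_le_norm _ _))
    _ ≤ K * ‖u‖ * ‖u‖ + ‖A'‖ * ‖u‖ * ‖u‖ := by gcongr
    _ = (K + ‖A'‖) * ‖u‖ ^ 2 := by ring

-- `sSup` of a set that is not bounded above is `0`, so this is what makes `δ3` a real bound.
theorem bddAbove_abs_inner_gradient_sub_sub_div {p : ℕ} {f : EuclideanSpace ℝ (Fin p) → ℝ}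
    (hf : ContDiff ℝ 2 f) (x₀ : EuclideanSpace ℝ (Fin p)) (F : Matrix (Fin p) (Fin p) ℝ)
    {S D : Matrix (Fin p) (Fin p) ℝ} (hS : IsUnit S) (hD : IsUnit D) (R : ℝ) :
    BddAbove {x : ℝ | ∃ u : EuclideanSpace ℝ (Fin p), u ≠ 0 ∧ ‖mApp S u‖ ≤ R ∧
      x = |⟪gradient f (x₀ + u) - gradient f x₀, u⟫ - ⟪mApp F u, u⟫| / ‖mApp D u‖ ^ 2} := by
  obtain ⟨C, hC, hbound⟩ :=
    hf.exists_abs_inner_gradient_sub_sub_le x₀ (toEuclideanLin F) (mopNorm S⁻¹ * R)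
  refine ⟨C * mopNorm D⁻¹ ^ 2, ?_⟩
  rintro _ ⟨u, -, hSu, rfl⟩
  have hu : ‖u‖ ≤ mopNorm S⁻¹ * R :=
    (norm_le_mopNorm_inv_mul hS u).trans (by gcongr; exact norm_nonneg _)
  refine div_le_of_le_mul₀ (by positivity) (by positivity) ?_
  calc _ ≤ C * ‖u‖ ^ 2 := hbound u hu
    _ ≤ C * (mopNorm D⁻¹ * ‖mApp D u‖) ^ 2 := by gcongr; exact norm_le_mopNorm_inv_mul hD u
    _ = C * mopNorm D⁻¹ ^ 2 * ‖mApp D u‖ ^ 2 := by ring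

theorem abs_inner_gradient_sub_sub_le_sSup_mul {p : ℕ} {f : EuclideanSpace ℝ (Fin p) → ℝ}
    (hf : ContDiff ℝ 2 f) (x₀ : EuclideanSpace ℝ (Fin p)) (F : Matrix (Fin p) (Fin p) ℝ)
    {S D : Matrix (Fin p) (Fin p) ℝ} (hS : IsUnit S) (hD : IsUnit D) {R : ℝ}
    {u : EuclideanSpace ℝ (Fin p)} (hu : u ≠ 0) (hSu : ‖mApp S u‖ ≤ R) :
    |⟪gradient f (x₀ + u) - gradient f x₀, u⟫ - ⟪mApp F u, u⟫| ≤
      sSup {x : ℝ | ∃ u : EuclideanSpace ℝ (Fin p), u ≠ 0 ∧ ‖mApp S u‖ ≤ R ∧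
        x = |⟪gradient f (x₀ + u) - gradient f x₀, u⟫ - ⟪mApp F u, u⟫| / ‖mApp D u‖ ^ 2} *
      ‖mApp D u‖ ^ 2 := by
  have hDu : 0 < ‖mApp D u‖ := norm_pos_iff.2 (mApp_ne_zero hD hu)
  exact (div_le_iff₀ (by positivity)).1
    (le_csSup (bddAbove_abs_inner_gradient_sub_sub_div hf x₀ F hS hD R) ⟨u, hu, hSu, rfl⟩)

lemma add_pos_of_abs_sub_sq_le {a b s e δ κ r : ℝ} (hr : 0 < r) (hs : s = 4 / 3 * r)
    (he : 0 < e) (heκ : e ≤ κ * s) (hδκ : δ * κ ^ 2 < 1 / 4) (ha : |a - s ^ 2| ≤ δ * e ^ 2)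
    (hb : -b ≤ r * s) : 0 < a + b := by
  have hδ : 0 ≤ δ := nonneg_of_mul_nonneg_left ((abs_nonneg _).trans ha) (by positivity)
  have hquad : δ * e ^ 2 < s ^ 2 / 4 := calc
    δ * e ^ 2 ≤ δ * (κ * s) ^ 2 := by gcongr
    _ = δ * κ ^ 2 * s ^ 2 := by ring
    _ < 1 / 4 * s ^ 2 := by gcongr; rw [hs]; positivity
    _ = s ^ 2 / 4 := by ring
  subst hs
  linarith [(abs_le.1 ha).1]

theorem mle_concentration_general
    {p : ℕ}
    (f : EuclideanSpace ℝ (Fin p) → ℝ)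
    (hconv : ConvexOn ℝ Set.univ f)
    (hf : ContDiff ℝ 2 f)
    (υs : EuclideanSpace ℝ (Fin p))
    (hgrad : gradient f υs = 0)
    (F : Matrix (Fin p) (Fin p) ℝ) (hF : F.PosDef)
    (ξ υt : EuclideanSpace ℝ (Fin p))
    (hmin : ∀ υ : EuclideanSpace ℝ (Fin p), f υt + ⟪ξ, υt⟫ ≤ f υ + ⟪ξ, υ⟫)
    (D : Matrix (Fin p) (Fin p) ℝ) (hD : D.PosDef)
    (κ : ℝ) (hκ : 0 < κ)
    (hLoew : (κ ^ 2 • F - D * D).PosSemidef)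
    (r : ℝ) (hrpos : 0 < r)
    (hξr : ‖mApp hF.posSemidef.sqrt⁻¹ ξ‖ ≤ r)
    (δ3 : ℝ)
    (hδ3 : δ3 = sSup {x : ℝ | ∃ u : EuclideanSpace ℝ (Fin p), u ≠ 0 ∧
      ‖mApp hF.posSemidef.sqrt u‖ ≤ 4 / 3 * r ∧
      x = |⟪gradient f (υs + u) - gradient f υs, u⟫ - ⟪mApp F u, u⟫| /
        ‖mApp D u‖ ^ 2})
    (hmain : δ3 * κ ^ 2 < 1 / 4) :
    ‖mApp hF.posSemidef.sqrt (υt - υs)‖ ≤ 4 / 3 * r ∧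
      ‖mApp D (υt - υs)‖ ≤ 4 * κ / 3 * r := by
  set S := hF.posSemidef.sqrt
  have hSh : S.IsHermitian := hF.posSemidef.isHermitian_sqrt
  have hSu : IsUnit S := hF.isUnit_sqrt
  have hSS : S * S = F := hF.posSemidef.sqrt_mul_sqrt
  have hDS : ∀ v, ‖mApp D v‖ ≤ κ * ‖mApp S v‖ :=
    norm_mApp_le_of_posSemidef hSh hD.isHermitian hκ.le (by rwa [hSS])
  have hSυ : ‖mApp S (υt - υs)‖ ≤ 4 / 3 * r := by
    refine hconv.norm_map_sub_le_of_inner_gradient_add_pos (hf.differentiable (by norm_num)) hmin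
      (toEuclideanLin S) υs (by positivity) fun v (hSv : ‖mApp S v‖ = 4 / 3 * r) => ?_
    have hv : v ≠ 0 := by rintro rfl; simp only [mApp, map_zero, norm_zero] at hSv; linarith
    have hrem := abs_inner_gradient_sub_sub_le_sSup_mul hf υs F hSu hD.isUnit hv hSv.le
    rw [← hδ3, hgrad, sub_zero, ← hSS, inner_mApp_mul_self hSh] at hrem
    rw [inner_add_left]
    exact add_pos_of_abs_sub_sq_le hrpos hSv (norm_pos_iff.2 (mApp_ne_zero hD.isUnit hv)) (hDS v)
      hmain hrem ((neg_le_abs _).trans ((abs_inner_le_norm_mApp_inv_mul hSh hSu ξ v).trans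
        (by gcongr)))
  refine ⟨hSυ, ?_⟩
  calc ‖mApp D (υt - υs)‖ ≤ κ * ‖mApp S (υt - υs)‖ := hDS _
    _ ≤ κ * (4 / 3 * r) := by gcongr
    _ = 4 * κ / 3 * r := by ring

theorem mle_concentration
    {p : ℕ} (hp : 1 ≤ p)
    (f : EuclideanSpace ℝ (Fin p) → ℝ)
    (hconv : ConvexOn ℝ Set.univ f)
    (hf : ContDiff ℝ 2 f)
    (υs : EuclideanSpace ℝ (Fin p))
    (hgrad : gradient f υs = 0)
    (F : Matrix (Fin p) (Fin p) ℝ) (hF : F.PosDef)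
    (hFdef : ∀ u w : EuclideanSpace ℝ (Fin p),
      iteratedFDeriv ℝ 2 f υs ![u, w] = ⟪mApp F u, w⟫)
    (ξ υt : EuclideanSpace ℝ (Fin p))
    (hmin : ∀ υ : EuclideanSpace ℝ (Fin p), f υt + ⟪ξ, υt⟫ ≤ f υ + ⟪ξ, υ⟫)
    (D : Matrix (Fin p) (Fin p) ℝ) (hD : D.PosDef)
    (κ : ℝ) (hκ : 0 < κ)
    (hLoew : (κ ^ 2 • F - D * D).PosSemidef)
    (r : ℝ) (hrpos : 0 < r)
    (hξr : ‖mApp hF.posSemidef.sqrt⁻¹ ξ‖ ≤ r)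
    (ω δ3 : ℝ)
    (hω : ω = sSup {x : ℝ | ∃ u : EuclideanSpace ℝ (Fin p), u ≠ 0 ∧
      ‖mApp hF.posSemidef.sqrt u‖ ≤ 4 / 3 * r ∧
      x = 2 * |f (υs + u) - f υs - ⟪gradient f υs, u⟫ - 1 / 2 * ⟪mApp F u, u⟫| /
        ‖mApp D u‖ ^ 2})
    (hδ3 : δ3 = sSup {x : ℝ | ∃ u : EuclideanSpace ℝ (Fin p), u ≠ 0 ∧
      ‖mApp hF.posSemidef.sqrt u‖ ≤ 4 / 3 * r ∧
      x = |⟪gradient f (υs + u) - gradient f υs, u⟫ - ⟪mApp F u, u⟫| /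
        ‖mApp D u‖ ^ 2})
    (hmain : δ3 * κ ^ 2 < 1 / 4) :
    ‖mApp hF.posSemidef.sqrt (υt - υs)‖ ≤ 4 / 3 * r ∧
      ‖mApp D (υt - υs)‖ ≤ 4 * κ / 3 * r :=
  mle_concentration_general f hconv hf υs hgrad F hF ξ υt hmin D hD κ hκ hLoew r hrpos hξr δ3 hδ3
    hmain
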